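/- Let α ≥ 0 with α ≠ 1, ε > 0, and p ∈ ℝ^n. A C² function χ : ℝ → ℝ with χ' > 0 and χ(z+1) = χ(z) + 1 satisfies ε^{α−1}·|p|²·χ''(z) − c·χ'(z) + g(χ(z)) = 0 for all z if and only if χ is a corrector for (ε^{(α−1)/2} p, c); consequently the unique constant for this scaled cell problem is c_α^ε(|p|) = c̄(ε^{(α−1)/2}|p|). Moreover, if α > 1 then lim_{ε→0⁺} c_α^ε(|p|) = (∫₀¹ 1/g(s) ds)⁻¹ for every p ∈ ℝ^n, while if 0 ≤ α < 1 then lim_{ε→0⁺} c_α^ε(|p|) = ∫₀¹ g(s) ds for every p ≠ 0 and c_α^ε(0) = (∫₀¹ 1/g(s) ds)⁻¹. -/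

import Mathlib

/-!
Write `δ = ‖q‖`, so that the cell problem reads `δ² χ'' = c χ' − g(χ)`. At an extremum of the
periodic function `χ'` the equation degenerates to `c χ' = g(χ)`; since `χ'` has mean one, this
gives `min g ≤ c` and `c χ' ≤ max g`.

Small `δ`: with `ψ = c χ' − g(χ)`, the bounded function `w(t) = δ² (χ'(z₀ + t) − χ'(z₀))` satisfies
`w' = (c / δ²) w + ψ(z₀) + O(t)`, the error coming from the Lipschitz bound on `g ∘ χ`. A bounded
solution of such an unstable linear equation forces `|ψ(z₀)| = O(δ²)`, and since
`∫₀¹ χ' / g(χ) = ∫₀¹ 1 / g`, we get `c ∫₀¹ 1 / g − 1 = ∫₀¹ ψ / g(χ) = O(δ²)`.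

Large `δ`: `|χ''| ≤ max g / δ²`, so on a period `χ` stays within `O(δ⁻²)` of the translation
`z ↦ χ(0) + z`, and integrating the equation gives `c = ∫₀¹ g(χ) = ∫₀¹ g + O(δ⁻²)`.

The scaled problem is the cell problem for `q = ε^{(α−1)/2} p`, which tends to `0` if `α > 1` and
to infinity if `α < 1` and `p ≠ 0`.
-/

open Set Filter intervalIntegral
open scoped Topology

noncomputable section

/-- A corrector for `(p, c)`: a C² function `χ : ℝ → ℝ` with `χ' > 0`, `χ(z+1) = χ(z) + 1`,
satisfying `|p|²·χ''(z) − c·χ'(z) + g(χ(z)) = 0` for all `z ∈ ℝ`. -/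
def IsCorrector {n : ℕ} (g : ℝ → ℝ) (p : EuclideanSpace ℝ (Fin n)) (c : ℝ) (χ : ℝ → ℝ) : Prop :=
  ContDiff ℝ 2 χ ∧ (∀ z, 0 < deriv χ z) ∧ (∀ z, χ (z + 1) = χ z + 1) ∧
  ∀ z, ‖p‖ ^ 2 * deriv (deriv χ) z - c * deriv χ z + g (χ z) = 0

namespace Function.Periodic

variable {f : ℝ → ℝ} {T : ℝ}

lemma exists_forall_le_of_continuous (hp : Periodic f T) (hT : T ≠ 0) (hf : Continuous f) :
    ∃ z, ∀ y, f z ≤ f y := by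
  obtain ⟨_, ⟨z, rfl⟩, hz⟩ := (hp.compact_of_continuous hT hf).exists_isLeast (range_nonempty f)
  exact ⟨z, fun y => hz ⟨y, rfl⟩⟩

lemma exists_forall_ge_of_continuous (hp : Periodic f T) (hT : T ≠ 0) (hf : Continuous f) :
    ∃ z, ∀ y, f y ≤ f z := by
  obtain ⟨_, ⟨z, rfl⟩, hz⟩ :=
    (hp.compact_of_continuous hT hf).exists_isGreatest (range_nonempty f)
  exact ⟨z, fun y => hz ⟨y, rfl⟩⟩

end Function.Periodic

lemma nonpos_at_zero_of_mul_le_deriv_of_le {v v' : ℝ → ℝ} {lam C : ℝ} (hlam : 0 < lam)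
    (hv : ∀ t, HasDerivAt v (v' t) t) (hgrowth : ∀ t, 0 ≤ t → lam * v t ≤ v' t)
    (hbdd : ∀ t, 0 ≤ t → v t ≤ C) : v 0 ≤ 0 := by
  have hw : ∀ t, HasDerivAt (fun s => Real.exp (-lam * s) * v s)
      (Real.exp (-lam * t) * (v' t - lam * v t)) t := fun t => by
    have hexp : HasDerivAt (fun s => Real.exp (-lam * s)) (Real.exp (-lam * t) * -lam) t := by
      simpa using ((hasDerivAt_id t).const_mul (-lam)).exp
    exact (hexp.mul (hv t)).congr_deriv (by ring)
  have hmono : MonotoneOn (fun s => Real.exp (-lam * s) * v s) (Ici 0) :=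
    monotoneOn_of_hasDerivWithinAt_nonneg (convex_Ici 0)
      (fun t _ => (hw t).continuousAt.continuousWithinAt) (fun t _ => (hw t).hasDerivWithinAt)
      fun t ht => mul_nonneg (Real.exp_pos _).le
        (sub_nonneg.2 (hgrowth t (interior_subset ht)))
  have hdecay : Tendsto (fun t => Real.exp (-lam * t) * C) atTop (𝓝 0) := by
    simpa using ((Real.tendsto_exp_atBot.comp
      (tendsto_id.const_mul_atTop_of_neg (neg_neg_of_pos hlam))).mul_const C)
  refine ge_of_tendsto hdecay ?_
  filter_upwards [eventually_ge_atTop 0] with t ht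
  calc v 0 = Real.exp (-lam * 0) * v 0 := by simp
    _ ≤ Real.exp (-lam * t) * v t := hmono self_mem_Ici ht ht
    _ ≤ Real.exp (-lam * t) * C := by gcongr; exact hbdd t ht

lemma le_div_of_add_sub_le_deriv_of_le {w w' : ℝ → ℝ} {lam A M C : ℝ} (hlam : 0 < lam)
    (hA : 0 ≤ A) (hw : ∀ t, HasDerivAt w (w' t) t) (hw0 : w 0 = 0)
    (hgrowth : ∀ t, 0 ≤ t → lam * w t + M - A * t ≤ w' t) (hbdd : ∀ t, 0 ≤ t → w t ≤ C) :
    M ≤ A / lam := by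
  set v := fun t => w t + (M - A / lam - A * t) / lam
  have hv : ∀ t, HasDerivAt v (w' t - A / lam) t := fun t =>
    ((hw t).add ((((hasDerivAt_id t).const_mul A).const_sub _).div_const lam)).congr_deriv
      (by ring)
  have hv0 := nonpos_at_zero_of_mul_le_deriv_of_le hlam hv
    (C := C + (M - A / lam) / lam) (fun t ht => by
      have := hgrowth t ht
      simp only [v, mul_add, mul_div_cancel₀ _ hlam.ne']
      linarith)
    (fun t ht => by
      have : 0 ≤ A * t / lam := by positivity
      simp only [v, sub_div (M - A / lam)]
      linarith [hbdd t ht])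
  simp only [v, hw0, zero_add, mul_zero, sub_zero] at hv0
  linarith [(div_nonpos_iff.mp hv0).resolve_left fun h => h.2.not_gt hlam]

namespace IsCorrector

variable {n : ℕ} {g : ℝ → ℝ} {q : EuclideanSpace ℝ (Fin n)} {c : ℝ} {χ : ℝ → ℝ}
  {gmin gmax : ℝ} {K : NNReal}

lemma differentiable (h : IsCorrector g q c χ) : Differentiable ℝ χ :=
  h.1.differentiable (by norm_num)

lemma differentiable_deriv (h : IsCorrector g q c χ) : Differentiable ℝ (deriv χ) :=
  h.1.differentiable_deriv_two

lemma continuous_deriv (h : IsCorrector g q c χ) : Continuous (deriv χ) :=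
  h.1.continuous_deriv (by norm_num)

lemma periodic_deriv (h : IsCorrector g q c χ) : Function.Periodic (deriv χ) 1 := fun z => by
  have := congrArg (deriv · z) (funext h.2.2.1 : (fun z => χ (z + 1)) = fun z => χ z + 1)
  simpa [deriv_comp_add_const] using this

lemma exists_mem_Ioo_deriv_eq_one (h : IsCorrector g q c χ) :
    ∃ s ∈ Ioo (0 : ℝ) 1, deriv χ s = 1 := by
  obtain ⟨s, hs, hderiv⟩ := exists_deriv_eq_slope χ zero_lt_one
    h.differentiable.continuous.continuousOn h.differentiable.differentiableOn
  refine ⟨s, hs, ?_⟩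
  have := h.2.2.1 0
  rw [zero_add] at this
  rw [hderiv, this]
  ring

lemma mul_deriv_eq_of_isLocalExtr (h : IsCorrector g q c χ) {z : ℝ}
    (hz : IsLocalExtr (deriv χ) z) : c * deriv χ z = g (χ z) := by
  have := h.2.2.2 z
  rw [hz.deriv_eq_zero] at this
  linarith

lemma const_pos (h : IsCorrector g q c χ) (hpos : ∀ y, 0 < g y) : 0 < c := by
  obtain ⟨z, hz⟩ :=
    h.periodic_deriv.exists_forall_ge_of_continuous one_ne_zero h.continuous_deriv
  have heq := h.mul_deriv_eq_of_isLocalExtr (Or.inr (Eventually.of_forall hz))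
  exact pos_of_mul_pos_left (heq.symm ▸ hpos (χ z)) (h.2.1 z).le

lemma le_const (h : IsCorrector g q c χ) (hpos : ∀ y, 0 < g y) (hmin : ∀ y, gmin ≤ g y) :
    gmin ≤ c := by
  obtain ⟨z, hz⟩ :=
    h.periodic_deriv.exists_forall_le_of_continuous one_ne_zero h.continuous_deriv
  obtain ⟨s, -, hs⟩ := h.exists_mem_Ioo_deriv_eq_one
  have hc := h.const_pos hpos
  calc gmin ≤ g (χ z) := hmin _
    _ = c * deriv χ z :=
      (h.mul_deriv_eq_of_isLocalExtr (Or.inl (Eventually.of_forall hz))).symm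
    _ ≤ c * 1 := by gcongr; exact hs ▸ hz s
    _ = c := mul_one c

lemma mul_deriv_le (h : IsCorrector g q c χ) (hpos : ∀ y, 0 < g y) (hmax : ∀ y, g y ≤ gmax)
    (z : ℝ) : c * deriv χ z ≤ gmax := by
  obtain ⟨zM, hzM⟩ :=
    h.periodic_deriv.exists_forall_ge_of_continuous one_ne_zero h.continuous_deriv
  have hc := h.const_pos hpos
  calc c * deriv χ z ≤ c * deriv χ zM := by gcongr; exact hzM z
    _ = g (χ zM) :=
      h.mul_deriv_eq_of_isLocalExtr (Or.inr (Eventually.of_forall hzM))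
    _ ≤ gmax := hmax _

lemma abs_deriv_le (h : IsCorrector g q c χ) (hpos : ∀ y, 0 < g y) (hmax : ∀ y, g y ≤ gmax)
    (z : ℝ) : |deriv χ z| ≤ gmax / c := by
  rw [abs_of_pos (h.2.1 z), le_div_iff₀' (h.const_pos hpos)]
  exact h.mul_deriv_le hpos hmax z

lemma abs_comp_sub_le (hg : LipschitzWith K g) (h : IsCorrector g q c χ) (hpos : ∀ y, 0 < g y)
    (hmax : ∀ y, g y ≤ gmax) (x y : ℝ) : |g (χ x) - g (χ y)| ≤ K * (gmax / c) * |x - y| := by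
  have hχ : |χ x - χ y| ≤ gmax / c * |x - y| :=
    convex_univ.norm_image_sub_le_of_norm_deriv_le (fun z _ => h.differentiable z)
      (fun z _ => h.abs_deriv_le hpos hmax z) (mem_univ y) (mem_univ x)
  calc |g (χ x) - g (χ y)| ≤ K * |χ x - χ y| := by
        simpa [Real.dist_eq] using hg.dist_le_mul (χ x) (χ y)
    _ ≤ K * (gmax / c * |x - y|) := by gcongr
    _ = K * (gmax / c) * |x - y| := by ring

lemma abs_deriv_sub_deriv_le (h : IsCorrector g q c χ) (hpos : ∀ y, 0 < g y)
    (hmax : ∀ y, g y ≤ gmax) (x y : ℝ) : |deriv χ x - deriv χ y| ≤ gmax / c := by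
  have hx := h.abs_deriv_le hpos hmax x
  have hy := h.abs_deriv_le hpos hmax y
  rw [abs_of_pos (h.2.1 x)] at hx
  rw [abs_of_pos (h.2.1 y)] at hy
  rw [abs_le]
  constructor <;> linarith [h.2.1 x, h.2.1 y]

lemma mul_mul_deriv_sub_le (hg : LipschitzWith K g) (h : IsCorrector g q c χ)
    (hpos : ∀ y, 0 < g y) (hmax : ∀ y, g y ≤ gmax) (hq : 0 < ‖q‖ ^ 2) {σ : ℝ} (hσ : |σ| = 1)
    (z₀ : ℝ) : σ * (c * deriv χ z₀ - g (χ z₀)) ≤ K * (gmax / c) / (c / ‖q‖ ^ 2) := by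
  have hc := h.const_pos hpos
  have hw : ∀ t, HasDerivAt (fun t => σ * ‖q‖ ^ 2 * (deriv χ (z₀ + t) - deriv χ z₀))
      (σ * ‖q‖ ^ 2 * deriv (deriv χ) (z₀ + t)) t := fun t =>
    (((h.differentiable_deriv _).hasDerivAt.comp_const_add z₀ t).sub_const _).const_mul _
  refine le_div_of_add_sub_le_deriv_of_le (div_pos hc hq)
    (mul_nonneg K.coe_nonneg (div_nonneg ((hpos 0).le.trans (hmax 0)) hc.le)) hw (by simp)
    (fun t ht => ?_) (C := ‖q‖ ^ 2 * (gmax / c)) (fun t _ => ?_)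
  · have hmod : σ * (g (χ (z₀ + t)) - g (χ z₀)) ≤ K * (gmax / c) * t := by
      calc σ * (g (χ (z₀ + t)) - g (χ z₀)) ≤ |σ * (g (χ (z₀ + t)) - g (χ z₀))| := le_abs_self _
        _ ≤ K * (gmax / c) * t := by
          rw [abs_mul, hσ, one_mul]
          simpa [abs_of_nonneg ht] using h.abs_comp_sub_le hg hpos hmax (z₀ + t) z₀
    have hlamq : c / ‖q‖ ^ 2 * ‖q‖ ^ 2 = c := div_mul_cancel₀ c hq.ne'
    linear_combination hmod + σ * (deriv χ (z₀ + t) - deriv χ z₀) * hlamq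
      - σ * h.2.2.2 (z₀ + t)
  · calc _ ≤ |σ * ‖q‖ ^ 2 * (deriv χ (z₀ + t) - deriv χ z₀)| := le_abs_self _
      _ = ‖q‖ ^ 2 * |deriv χ (z₀ + t) - deriv χ z₀| := by
        rw [abs_mul, abs_mul, hσ, one_mul, abs_of_pos hq]
      _ ≤ ‖q‖ ^ 2 * (gmax / c) := by gcongr; exact h.abs_deriv_sub_deriv_le hpos hmax _ _

lemma abs_mul_deriv_sub_le (hg : LipschitzWith K g) (h : IsCorrector g q c χ)
    (hpos : ∀ y, 0 < g y) (hmax : ∀ y, g y ≤ gmax) (z₀ : ℝ) :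
    |c * deriv χ z₀ - g (χ z₀)| ≤ K * gmax * ‖q‖ ^ 2 / c ^ 2 := by
  rcases (sq_nonneg ‖q‖).eq_or_lt with hq | hq
  · have := h.2.2.2 z₀
    rw [← hq] at this ⊢
    rw [mul_zero, zero_div, abs_nonpos_iff]
    linarith
  have hA : K * (gmax / c) / (c / ‖q‖ ^ 2) = K * gmax * ‖q‖ ^ 2 / c ^ 2 := by
    field_simp
  rw [← hA, abs_le]
  constructor
  · linarith [h.mul_mul_deriv_sub_le hg hpos hmax hq (σ := -1) (by simp) z₀]
  · linarith [h.mul_mul_deriv_sub_le hg hpos hmax hq (σ := 1) (by simp) z₀]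

lemma integral_deriv_div_comp (hgc : Continuous g) (hper : Function.Periodic g 1)
    (hpos : ∀ y, 0 < g y) (h : IsCorrector g q c χ) :
    ∫ z in (0:ℝ)..1, deriv χ z / g (χ z) = ∫ s in (0:ℝ)..1, (g s)⁻¹ := by
  have hinv : Continuous fun s => (g s)⁻¹ := hgc.inv₀ fun s => (hpos s).ne'
  have hχ1 : χ 1 = χ 0 + 1 := by simpa using h.2.2.1 0
  calc ∫ z in (0:ℝ)..1, deriv χ z / g (χ z)
      = ∫ z in (0:ℝ)..1, ((fun s => (g s)⁻¹) ∘ χ) z * deriv χ z := by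
        simp only [Function.comp_apply, div_eq_inv_mul]
    _ = ∫ s in χ 0..χ 0 + 1, (g s)⁻¹ := by
        rw [integral_comp_mul_deriv (fun z _ => (h.differentiable z).hasDerivAt)
          h.continuous_deriv.continuousOn hinv, hχ1]
    _ = ∫ s in (0:ℝ)..0 + 1, (g s)⁻¹ := (hper.comp Inv.inv).intervalIntegral_add_eq _ _
    _ = ∫ s in (0:ℝ)..1, (g s)⁻¹ := by rw [zero_add]

lemma abs_mul_integral_inv_sub_one_le (hg : LipschitzWith K g) (hper : Function.Periodic g 1)
    (hpos : ∀ y, 0 < g y) (hgmin : 0 < gmin) (hmin : ∀ y, gmin ≤ g y) (hmax : ∀ y, g y ≤ gmax)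
    (h : IsCorrector g q c χ) :
    |c * (∫ s in (0:ℝ)..1, (g s)⁻¹) - 1| ≤ K * gmax / gmin ^ 3 * ‖q‖ ^ 2 := by
  have hcmin := h.le_const hpos hmin
  have hgmax : 0 ≤ gmax := (hpos 0).le.trans (hmax 0)
  have hcont : Continuous fun z => deriv χ z / g (χ z) :=
    h.continuous_deriv.div (hg.continuous.comp h.differentiable.continuous) fun z => (hpos _).ne'
  have hrepr : c * (∫ s in (0:ℝ)..1, (g s)⁻¹) - 1
      = ∫ z in (0:ℝ)..1, (c * deriv χ z - g (χ z)) / g (χ z) :=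
    calc c * (∫ s in (0:ℝ)..1, (g s)⁻¹) - 1
        = c * (∫ z in (0:ℝ)..1, deriv χ z / g (χ z)) - 1 := by
          rw [h.integral_deriv_div_comp hg.continuous hper hpos]
      _ = ∫ z in (0:ℝ)..1, (c * (deriv χ z / g (χ z)) - 1) := by
          rw [integral_sub ((hcont.const_mul c).intervalIntegrable 0 1) intervalIntegrable_const,
            integral_const_mul]
          simp
      _ = _ := integral_congr fun z _ => by field_simp [(hpos (χ z)).ne']
  rw [hrepr, ← Real.norm_eq_abs]
  refine (norm_integral_le_of_norm_le_const (C := K * gmax / gmin ^ 3 * ‖q‖ ^ 2)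
    fun z _ => ?_).trans (by simp)
  rw [Real.norm_eq_abs, abs_div, abs_of_pos (hpos _)]
  calc |c * deriv χ z - g (χ z)| / g (χ z) ≤ K * gmax * ‖q‖ ^ 2 / c ^ 2 / gmin :=
        div_le_div₀ (by positivity) (h.abs_mul_deriv_sub_le hg hpos hmax z) hgmin (hmin _)
    _ ≤ K * gmax * ‖q‖ ^ 2 / gmin ^ 2 / gmin := by gcongr
    _ = K * gmax / gmin ^ 3 * ‖q‖ ^ 2 := by ring

lemma integral_comp_eq_const (hgc : Continuous g) (h : IsCorrector g q c χ) :
    ∫ z in (0:ℝ)..1, g (χ z) = c := by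
  have hF : ∀ z, HasDerivAt (fun z => c * χ z - ‖q‖ ^ 2 * deriv χ z) (g (χ z)) z := fun z =>
    (((h.differentiable z).hasDerivAt.const_mul c).sub
      ((h.differentiable_deriv z).hasDerivAt.const_mul _)).congr_deriv (by linarith [h.2.2.2 z])
  rw [integral_eq_sub_of_hasDerivAt (fun z _ => hF z)
    ((hgc.comp h.differentiable.continuous).intervalIntegrable 0 1)]
  have hχ1 : χ 1 = χ 0 + 1 := by simpa using h.2.2.1 0
  have hχ'1 : deriv χ 1 = deriv χ 0 := by simpa using h.periodic_deriv 0
  rw [hχ1, hχ'1]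
  ring

lemma abs_sub_affine_le (h : IsCorrector g q c χ) {B : ℝ}
    (hB : ∀ z, |deriv (deriv χ) z| ≤ B) {z : ℝ} (hz : z ∈ Icc (0:ℝ) 1) :
    |χ z - (χ 0 + z)| ≤ B := by
  obtain ⟨s, hs, hs1⟩ := h.exists_mem_Ioo_deriv_eq_one
  have hB0 : 0 ≤ B := (abs_nonneg _).trans (hB 0)
  have hderiv : ∀ w ∈ Icc (0:ℝ) 1, |deriv χ w - 1| ≤ B := fun w hw => by
    rw [← hs1]
    calc |deriv χ w - deriv χ s| ≤ B * |w - s| :=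
          convex_univ.norm_image_sub_le_of_norm_deriv_le (fun x _ => h.differentiable_deriv x)
            (fun x _ => hB x) (mem_univ s) (mem_univ w)
      _ ≤ B * 1 := by
          gcongr
          rw [abs_le]
          constructor <;> linarith [hw.1, hw.2, hs.1, hs.2]
      _ = B := mul_one B
  calc |χ z - (χ 0 + z)| = |(χ z - z) - (χ 0 - 0)| := by ring_nf
    _ ≤ B * |z - 0| :=
        (convex_Icc (0:ℝ) 1).norm_image_sub_le_of_norm_hasDerivWithin_le
          (fun w _ => ((h.differentiable w).hasDerivAt.sub (hasDerivAt_id w)).hasDerivWithinAt)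
          hderiv (left_mem_Icc.2 zero_le_one) hz
    _ ≤ B * 1 := by
        gcongr
        rw [sub_zero, abs_of_nonneg hz.1]
        exact hz.2
    _ = B := mul_one B

lemma abs_deriv_deriv_le (h : IsCorrector g q c χ) (hpos : ∀ y, 0 < g y)
    (hmax : ∀ y, g y ≤ gmax) (hq : 0 < ‖q‖ ^ 2) (z : ℝ) :
    |deriv (deriv χ) z| ≤ gmax / ‖q‖ ^ 2 := by
  have hψ : deriv (deriv χ) z = (c * deriv χ z - g (χ z)) / ‖q‖ ^ 2 := by
    rw [eq_div_iff hq.ne']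
    linarith [h.2.2.2 z]
  rw [hψ, abs_div, abs_of_pos hq]
  gcongr
  rw [abs_le]
  constructor <;> linarith [h.mul_deriv_le hpos hmax z, mul_pos (h.const_pos hpos) (h.2.1 z),
    hpos (χ z), hmax (χ z)]

lemma sq_norm_mul_abs_sub_integral_le (hg : LipschitzWith K g) (hper : Function.Periodic g 1)
    (hpos : ∀ y, 0 < g y) (hmax : ∀ y, g y ≤ gmax) (h : IsCorrector g q c χ) :
    ‖q‖ ^ 2 * |c - ∫ s in (0:ℝ)..1, g s| ≤ K * gmax := by
  have hgmax : 0 ≤ gmax := (hpos 0).le.trans (hmax 0)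
  rcases (sq_nonneg ‖q‖).eq_or_lt with hq | hq
  · rw [← hq, zero_mul]
    positivity
  have hshift : ∫ z in (0:ℝ)..1, g (χ 0 + z) = ∫ s in (0:ℝ)..1, g s := by
    rw [integral_comp_add_left, add_zero, hper.intervalIntegral_add_eq (χ 0) 0, zero_add]
  have hgc := hg.continuous
  have hint₁ : IntervalIntegrable (fun z => g (χ z)) MeasureTheory.volume 0 1 :=
    (hgc.comp h.differentiable.continuous).intervalIntegrable 0 1
  have hint₂ : IntervalIntegrable (fun z => g (χ 0 + z)) MeasureTheory.volume 0 1 :=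
    (hgc.comp (continuous_const_add _)).intervalIntegrable 0 1
  have hdiff : c - ∫ s in (0:ℝ)..1, g s = ∫ z in (0:ℝ)..1, (g (χ z) - g (χ 0 + z)) := by
    rw [integral_sub hint₁ hint₂, hshift, integral_comp_eq_const hgc h]
  have hbound : |c - ∫ s in (0:ℝ)..1, g s| ≤ K * (gmax / ‖q‖ ^ 2) := by
    rw [hdiff, ← Real.norm_eq_abs]
    refine (norm_integral_le_of_norm_le_const (C := K * (gmax / ‖q‖ ^ 2))
      fun z hz => ?_).trans (by simp)
    rw [uIoc_of_le zero_le_one] at hz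
    calc ‖g (χ z) - g (χ 0 + z)‖ ≤ K * ‖χ z - (χ 0 + z)‖ := hg.norm_sub_le _ _
      _ ≤ K * (gmax / ‖q‖ ^ 2) := by
          gcongr
          exact h.abs_sub_affine_le (h.abs_deriv_deriv_le hpos hmax hq) (Ioc_subset_Icc_self hz)
  calc ‖q‖ ^ 2 * |c - ∫ s in (0:ℝ)..1, g s| ≤ ‖q‖ ^ 2 * (K * (gmax / ‖q‖ ^ 2)) := by gcongr
    _ = K * gmax := by rw [mul_left_comm, mul_div_cancel₀ _ hq.ne']

end IsCorrector

section Limits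

variable {n : ℕ} {g : ℝ → ℝ} {K : NNReal} {gmin gmax : ℝ}
  (cbar : EuclideanSpace ℝ (Fin n) → ℝ)

lemma tendsto_nhds_zero_of_isCorrector (hg : LipschitzWith K g) (hper : Function.Periodic g 1)
    (hpos : ∀ y, 0 < g y) (hgmin : 0 < gmin) (hmin : ∀ y, gmin ≤ g y) (hmax : ∀ y, g y ≤ gmax)
    (hcorr : ∀ q, ∃ χ, IsCorrector g q (cbar q) χ) :
    Tendsto cbar (𝓝 0) (𝓝 (∫ s in (0:ℝ)..1, (g s)⁻¹)⁻¹) := by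
  set I := ∫ s in (0:ℝ)..1, (g s)⁻¹
  have hI : 0 < I := intervalIntegral_pos_of_pos_on
    ((hg.continuous.inv₀ fun s => (hpos s).ne').intervalIntegrable 0 1)
    (fun s _ => inv_pos.2 (hpos s)) zero_lt_one
  have hbound : ∀ q, ‖cbar q - I⁻¹‖ ≤ K * gmax / gmin ^ 3 * ‖q‖ ^ 2 / I := fun q => by
    obtain ⟨χ, hχ⟩ := hcorr q
    rw [le_div_iff₀ hI, Real.norm_eq_abs, ← abs_of_pos hI, ← abs_mul, abs_of_pos hI, sub_mul,
      inv_mul_cancel₀ hI.ne']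
    exact hχ.abs_mul_integral_inv_sub_one_le hg hper hpos hgmin hmin hmax
  exact tendsto_iff_norm_sub_tendsto_zero.2 (squeeze_zero (fun _ => norm_nonneg _) hbound
    (Continuous.tendsto' (by fun_prop) 0 0 (by simp)))

lemma tendsto_cobounded_of_isCorrector (hg : LipschitzWith K g) (hper : Function.Periodic g 1)
    (hpos : ∀ y, 0 < g y) (hmax : ∀ y, g y ≤ gmax)
    (hcorr : ∀ q, ∃ χ, IsCorrector g q (cbar q) χ) :
    Tendsto cbar (Bornology.cobounded _) (𝓝 (∫ s in (0:ℝ)..1, g s)) := by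
  have hsq : Tendsto (fun q : EuclideanSpace ℝ (Fin n) => ‖q‖ ^ 2) (Bornology.cobounded _) atTop :=
    (tendsto_pow_atTop two_ne_zero).comp tendsto_norm_cobounded_atTop
  have hbound : ∀ᶠ q in Bornology.cobounded _,
      ‖cbar q - ∫ s in (0:ℝ)..1, g s‖ ≤ K * gmax / ‖q‖ ^ 2 := by
    filter_upwards [hsq.eventually_gt_atTop 0] with q hq
    obtain ⟨χ, hχ⟩ := hcorr q
    rw [le_div_iff₀' hq]
    exact hχ.sq_norm_mul_abs_sub_integral_le hg hper hpos hmax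
  exact tendsto_iff_norm_sub_tendsto_zero.2 (squeeze_zero' (Eventually.of_forall fun _ =>
    norm_nonneg _) hbound (tendsto_const_nhds.div_atTop hsq))

end Limits

section Scaling

variable {E : Type*} [SeminormedAddCommGroup E] [NormedSpace ℝ E]

lemma norm_rpow_smul_sq {ε : ℝ} (hε : 0 < ε) (r : ℝ) (p : E) :
    ‖ε ^ (r / 2) • p‖ ^ 2 = ε ^ r * ‖p‖ ^ 2 := by
  rw [norm_smul, Real.norm_of_nonneg (Real.rpow_nonneg hε.le _), mul_pow, ← Real.rpow_natCast,
    ← Real.rpow_mul hε.le]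
  norm_num

lemma tendsto_rpow_smul_nhdsGT_zero {r : ℝ} (hr : 0 < r) (p : E) :
    Tendsto (fun ε : ℝ => ε ^ r • p) (𝓝[>] 0) (𝓝 0) := by
  have h := ((Real.continuousAt_rpow_const 0 r (Or.inr hr.le)).tendsto.mono_left
    (nhdsWithin_le_nhds (s := Ioi 0))).smul_const p
  rwa [Real.zero_rpow hr.ne', zero_smul] at h

lemma tendsto_rpow_smul_cobounded {r : ℝ} (hr : r < 0) {p : E} (hp : ‖p‖ ≠ 0) :
    Tendsto (fun ε : ℝ => ε ^ r • p) (𝓝[>] 0) (Bornology.cobounded E) := by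
  rw [← tendsto_norm_atTop_iff_cobounded]
  refine ((tendsto_rpow_neg_nhdsGT_zero hr).atTop_mul_const
    ((norm_nonneg p).lt_of_ne' hp)).congr' ?_
  filter_upwards [self_mem_nhdsWithin] with ε (hε : 0 < ε)
  rw [norm_smul, Real.norm_of_nonneg (Real.rpow_nonneg hε.le _)]

end Scaling

theorem statement_11_general {n : ℕ} (g : ℝ → ℝ) (hg : ∃ K, LipschitzWith K g)
    (hper : ∀ y, g (y + 1) = g y) (hpos : ∀ y, 0 < g y)
    (α : ℝ)
    (cbar : EuclideanSpace ℝ (Fin n) → ℝ)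
    (hcorr : ∀ q : EuclideanSpace ℝ (Fin n), ∃ χ, IsCorrector g q (cbar q) χ) :
    (∀ ε : ℝ, 0 < ε → ∀ (p : EuclideanSpace ℝ (Fin n)) (c : ℝ) (χ : ℝ → ℝ),
      (ContDiff ℝ 2 χ ∧ (∀ z, 0 < deriv χ z) ∧ (∀ z, χ (z + 1) = χ z + 1) ∧
        ∀ z, ε ^ (α - 1) * ‖p‖ ^ 2 * deriv (deriv χ) z - c * deriv χ z + g (χ z) = 0) ↔
      IsCorrector g ((ε ^ ((α - 1) / 2)) • p) c χ) ∧
    (1 < α → ∀ p : EuclideanSpace ℝ (Fin n),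
      Tendsto (fun ε : ℝ => cbar ((ε ^ ((α - 1) / 2)) • p)) (𝓝[>] (0:ℝ))
        (𝓝 ((∫ s in (0:ℝ)..1, (g s)⁻¹)⁻¹))) ∧
    (α < 1 → ∀ p : EuclideanSpace ℝ (Fin n), p ≠ 0 →
      Tendsto (fun ε : ℝ => cbar ((ε ^ ((α - 1) / 2)) • p)) (𝓝[>] (0:ℝ))
        (𝓝 (∫ s in (0:ℝ)..1, g s))) ∧
    cbar 0 = (∫ s in (0:ℝ)..1, (g s)⁻¹)⁻¹ := by
  obtain ⟨K, hK⟩ := hg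
  obtain ⟨zmin, hmin⟩ :=
    Function.Periodic.exists_forall_le_of_continuous hper one_ne_zero hK.continuous
  obtain ⟨zmax, hmax⟩ :=
    Function.Periodic.exists_forall_ge_of_continuous hper one_ne_zero hK.continuous
  have hzero := tendsto_nhds_zero_of_isCorrector cbar hK hper hpos (hpos zmin) hmin hmax hcorr
  refine ⟨fun ε hε p c χ => by rw [IsCorrector, norm_rpow_smul_sq hε], fun hα p => ?_,
    fun hα p hp => ?_, eq_of_tendsto_nhds hzero⟩
  · exact hzero.comp (tendsto_rpow_smul_nhdsGT_zero (by linarith) p)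
  · exact (tendsto_cobounded_of_isCorrector cbar hK hper hpos hmax hcorr).comp
      (tendsto_rpow_smul_cobounded (by linarith) (norm_ne_zero_iff.2 hp))

/-- The scaled cell problem `ε^{α−1}|p|²χ'' − cχ' + g(χ) = 0` is equivalent to the
corrector equation for `(ε^{(α−1)/2} p, c)`; hence `c_α^ε(|p|) = c̄(ε^{(α−1)/2}|p|)`,
with the stated limits as `ε → 0⁺`. -/
theorem statement_11 {n : ℕ} (g : ℝ → ℝ) (hg : ∃ K, LipschitzWith K g)
    (hper : ∀ y, g (y + 1) = g y) (hpos : ∀ y, 0 < g y)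
    (α : ℝ) (hα0 : 0 ≤ α) (hα1 : α ≠ 1)
    (cbar : EuclideanSpace ℝ (Fin n) → ℝ)
    (hcorr : ∀ q : EuclideanSpace ℝ (Fin n), ∃ χ, IsCorrector g q (cbar q) χ)
    (hinv : ∀ q q' : EuclideanSpace ℝ (Fin n), ‖q‖ = ‖q'‖ → cbar q = cbar q') :
    (∀ ε : ℝ, 0 < ε → ∀ (p : EuclideanSpace ℝ (Fin n)) (c : ℝ) (χ : ℝ → ℝ),
      (ContDiff ℝ 2 χ ∧ (∀ z, 0 < deriv χ z) ∧ (∀ z, χ (z + 1) = χ z + 1) ∧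
        ∀ z, ε ^ (α - 1) * ‖p‖ ^ 2 * deriv (deriv χ) z - c * deriv χ z + g (χ z) = 0) ↔
      IsCorrector g ((ε ^ ((α - 1) / 2)) • p) c χ) ∧
    (1 < α → ∀ p : EuclideanSpace ℝ (Fin n),
      Tendsto (fun ε : ℝ => cbar ((ε ^ ((α - 1) / 2)) • p)) (𝓝[>] (0:ℝ))
        (𝓝 ((∫ s in (0:ℝ)..1, (g s)⁻¹)⁻¹))) ∧
    (α < 1 → ∀ p : EuclideanSpace ℝ (Fin n), p ≠ 0 →
      Tendsto (fun ε : ℝ => cbar ((ε ^ ((α - 1) / 2)) • p)) (𝓝[>] (0:ℝ))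
        (𝓝 (∫ s in (0:ℝ)..1, g s))) ∧
    cbar 0 = (∫ s in (0:ℝ)..1, (g s)⁻¹)⁻¹ :=
  statement_11_general g hg hper hpos α cbar hcorr
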